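/- Let σ: 𝒜 → ℬ⁺ be a non-erasing morphism between finite alphabets that is injective on 𝒜^ℤ. If (k,x) and (k',x') are distinct centered σ-representations of some y ∈ ℬ^ℤ, then (k,x) and (k',x') have no common σ-cut, i.e., C_σ(k,x) ∩ C_σ(k',x') = ∅. -/

import Mathlib

open scoped BigOperators

namespace Recog

variable {A B C : Type*}

/-- A morphism assigning a word to each letter is non-erasing if every image is nonempty. -/
def NonErasing (σ : A → List B) : Prop := ∀ a, σ a ≠ []

/-- Apply a morphism letterwise to a finite word, concatenating the images. -/
def wordApply (σ : A → List B) : List A → List B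
  | [] => []
  | a :: w => σ a ++ wordApply σ w

/-- Composition of morphisms `τ ∘ σ`. -/
def comp (τ : B → List C) (σ : A → List B) : A → List C := fun a => wordApply τ (σ a)

/-- The `ℓ`-th cutting point of the representation `(0, x)`:
`|σ(x_[0,ℓ))|` for `ℓ ≥ 0` and `-|σ(x_[ℓ,0))|` for `ℓ < 0`. -/
def cut (σ : A → List B) (x : ℤ → A) (ℓ : ℤ) : ℤ :=
  if 0 ≤ ℓ then ∑ i ∈ Finset.range ℓ.toNat, ((σ (x i)).length : ℤ)
  else -∑ i ∈ Finset.range (-ℓ).toNat, ((σ (x (-(i : ℤ) - 1))).length : ℤ)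

/-- `y` is the bi-infinite image `σ(x)`, where `σ(x₀)` starts at position `0`. -/
def IsSubstPt (σ : A → List B) (x : ℤ → A) (y : ℤ → B) : Prop :=
  ∀ (ℓ : ℤ) (j : ℕ) (hj : j < (σ (x ℓ)).length),
    y (cut σ x ℓ + j) = (σ (x ℓ)).get ⟨j, hj⟩

/-- `(k, x)` is a `σ`-representation of `y`, i.e. `y = T^k σ(x)`. -/
def IsRep (σ : A → List B) (y : ℤ → B) (k : ℤ) (x : ℤ → A) : Prop :=
  IsSubstPt σ x fun n => y (n - k)

/-- `(k, x)` is a centered `σ`-representation of `y`: `y = T^k σ(x)` with `0 ≤ k < |σ(x₀)|`. -/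
def IsCenteredRep (σ : A → List B) (y : ℤ → B) (k : ℤ) (x : ℤ → A) : Prop :=
  IsRep σ y k x ∧ 0 ≤ k ∧ k < ((σ (x 0)).length : ℤ)

/-- `y` is aperiodic: `T^p y ≠ y` for all `p ≥ 1`. -/
def Aperiodic (y : ℤ → B) : Prop := ∀ p : ℕ, 1 ≤ p → (fun n => y (n + p)) ≠ y

/-- `y` is periodic: `T^p y = y` for some `p ≥ 1`. -/
def Periodic (y : ℤ → B) : Prop := ∃ p : ℕ, 1 ≤ p ∧ (fun n => y (n + p)) = y

/-- The set of `σ`-cutting points of the representation `(k, x)`. -/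
def cutSet (σ : A → List B) (x : ℤ → A) (k : ℤ) : Set ℤ :=
  {m : ℤ | ∃ ℓ : ℤ, m = cut σ x ℓ - k}

/-- `σ` is recognizable in `X`: every `y` has at most one centered `σ`-representation in `X`. -/
def RecIn (σ : A → List B) (X : Set (ℤ → A)) : Prop :=
  ∀ (y : ℤ → B) (k k' : ℤ) (x x' : ℤ → A), x ∈ X → x' ∈ X →
    IsCenteredRep σ y k x → IsCenteredRep σ y k' x' → k = k' ∧ x = x'

/-- `σ` is recognizable in `X` for aperiodic points. -/
def RecInAp (σ : A → List B) (X : Set (ℤ → A)) : Prop :=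
  ∀ y : ℤ → B, Aperiodic y → ∀ (k k' : ℤ) (x x' : ℤ → A), x ∈ X → x' ∈ X →
    IsCenteredRep σ y k x → IsCenteredRep σ y k' x' → k = k' ∧ x = x'

/-- `σ` is left permutative: the first letters of `σ a` and `σ b` differ for distinct `a, b`. -/
def LeftPermutative (σ : A → List B) : Prop :=
  ∀ a b : A, a ≠ b → (σ a).head? ≠ (σ b).head?

/-- `σ` is right permutative: the last letters of `σ a` and `σ b` differ for distinct `a, b`. -/
def RightPermutative (σ : A → List B) : Prop :=
  ∀ a b : A, a ≠ b → (σ a).getLast? ≠ (σ b).getLast?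

/-- `σ` and `σ'` are rotationally conjugate. -/
def RotConj (σ σ' : A → List B) : Prop :=
  ∃ w : List B, (∀ a, σ a ++ w = w ++ σ' a) ∨ (∀ a, w ++ σ a = σ' a ++ w)

/-- The incidence matrix of `σ`, over `ℚ`: entry `(b, a)` counts occurrences of `b` in `σ a`. -/
noncomputable def incidence (σ : A → List B) [DecidableEq B] : Matrix B A ℚ :=
  Matrix.of fun b a => ((σ a).count b : ℚ)

/-- The finite subword `x_[i, i+m)` of a bi-infinite sequence. -/
def factor (x : ℤ → A) (i : ℤ) (m : ℕ) : List A := (List.range m).map fun j => x (i + j)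

/-- The language of a bi-infinite sequence: the set of its finite subwords. -/
def lang (x : ℤ → A) : Set (List A) := {w | ∃ (i : ℤ) (m : ℕ), w = factor x i m}

/-- `σ` is injective on bi-infinite sequences. -/
def InjZ (σ : A → List B) : Prop :=
  ∀ (x x' : ℤ → A) (y : ℤ → B), IsSubstPt σ x y → IsSubstPt σ x' y → x = x'

/-- Cutting points for one-sided sequences. -/
def cutN (σ : A → List B) (x : ℕ → A) (ℓ : ℕ) : ℕ :=
  ∑ i ∈ Finset.range ℓ, (σ (x i)).length

/-- `y` is the one-sided image `σ(x)` for `x : ℕ → A`. -/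
def IsSubstPtN (σ : A → List B) (x : ℕ → A) (y : ℕ → B) : Prop :=
  ∀ (ℓ j : ℕ) (hj : j < (σ (x ℓ)).length),
    y (cutN σ x ℓ + j) = (σ (x ℓ)).get ⟨j, hj⟩

/-- `σ` is injective on one-sided (right-infinite) sequences. -/
def InjN (σ : A → List B) : Prop :=
  ∀ (x x' : ℕ → A) (y : ℕ → B), IsSubstPtN σ x y → IsSubstPtN σ x' y → x = x'

/-- The total length `⦀σ⦀ = Σ_a |σ a|`. -/
def totalLen (σ : A → List B) [Fintype A] : ℕ := ∑ a, (σ a).length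

/-- `X` is invariant under the two-sided shift. -/
def ShiftInvariant (X : Set (ℤ → A)) : Prop :=
  ∀ x ∈ X, (fun n => x (n + 1)) ∈ X ∧ (fun n => x (n - 1)) ∈ X

/-- The iterate `σ^n` of a substitution, applied to a letter. -/
def iter (σ : A → List A) : ℕ → A → List A
  | 0, a => [a]
  | n + 1, a => wordApply (iter σ n) (σ a)

/-- The language `ℒ_σ` of a substitution: subwords of the `σ^n(a)`. -/
def subLang (σ : A → List A) : Set (List A) := {w | ∃ (n : ℕ) (a : A), w <:+: iter σ n a}

/-- The substitutive shift `X_σ`. -/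
def subX (σ : A → List A) : Set (ℤ → A) := {x | ∀ w ∈ lang x, w ∈ subLang σ}

/-- `σ` is recognizable in the sense of Mossé for `x`. -/
def MosseRec (σ : A → List B) (x : ℤ → A) : Prop :=
  ∃ ℓ : ℕ, ∀ y : ℤ → B, IsSubstPt σ x y →
    ∀ m ∈ cutSet σ x 0, ∀ m' : ℤ,
      factor y (m - ℓ) (2 * ℓ) = factor y (m' - ℓ) (2 * ℓ) → m' ∈ cutSet σ x 0

section Sadic

variable {𝒜 : ℕ → Type*}

/-- `block σ N = σ_[0,N)`, mapping a letter of `𝒜 N` to a word over `𝒜 0`. -/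
def block (σ : ∀ n, 𝒜 (n + 1) → List (𝒜 n)) : ∀ N, 𝒜 N → List (𝒜 0)
  | 0, a => [a]
  | N + 1, a => wordApply (block σ N) (σ N a)

/-- `blockFrom σ n k = σ_[n,n+k)`, mapping a letter of `𝒜 (n+k)` to a word over `𝒜 n`. -/
def blockFrom (σ : ∀ n, 𝒜 (n + 1) → List (𝒜 n)) (n k : ℕ) : 𝒜 (n + k) → List (𝒜 n) :=
  block (𝒜 := fun m => 𝒜 (n + m)) (fun m => σ (n + m)) k

/-- The language `ℒ^(n)_σ` of a directive sequence. -/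
def sadicLang (σ : ∀ n, 𝒜 (n + 1) → List (𝒜 n)) (n : ℕ) : Set (List (𝒜 n)) :=
  {w | ∃ (k : ℕ) (a : 𝒜 (n + k)), 1 ≤ k ∧ w <:+: blockFrom σ n k a}

/-- The shift `X^(n)_σ` of a directive sequence. -/
def sadicX (σ : ∀ n, 𝒜 (n + 1) → List (𝒜 n)) (n : ℕ) : Set (ℤ → 𝒜 n) :=
  {x | ∀ w ∈ lang x, w ∈ sadicLang σ n}

/-- A directive sequence is everywhere growing if `min_a |σ_[0,n)(a)| → ∞`. -/
def EverywhereGrowing (σ : ∀ n, 𝒜 (n + 1) → List (𝒜 n)) : Prop :=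
  ∀ m : ℕ, ∃ N : ℕ, ∀ n ≥ N, ∀ a : 𝒜 n, m ≤ (block σ n a).length

end Sadic

end Recog

/-!
If the two representations share a cut `m`, re-indexing each of them at that cut gives two
preimages of `T^m y` under `σ`, which coincide by injectivity. Both original sequences are then
shifts of one sequence `z`, and in each case the shift is determined by the position `-m`: since
`0 ≤ k < |σ(x₀)|`, it lies in the image of the letter `z_{-ℓ}`, and the images of distinct
letters of `z` occupy disjoint intervals.
-/

namespace Recog

variable {A B : Type*} (σ : A → List B)

theorem cut_zero (x : ℤ → A) : cut σ x 0 = 0 := by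
  simp [cut]

theorem cut_succ (x : ℤ → A) (ℓ : ℤ) :
    cut σ x (ℓ + 1) = cut σ x ℓ + ((σ (x ℓ)).length : ℤ) := by
  unfold cut
  rcases le_or_gt 0 ℓ with h | h
  · rw [if_pos h, if_pos (by omega), show (ℓ + 1).toNat = ℓ.toNat + 1 by omega,
      Finset.sum_range_succ, Int.toNat_of_nonneg h]
  · rcases (show ℓ ≤ -1 by omega).eq_or_lt with rfl | h'
    · simp
    · rw [if_neg (by omega), if_neg (by omega),
        show (-ℓ).toNat = (-(ℓ + 1)).toNat + 1 by omega, Finset.sum_range_succ,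
        show -((-(ℓ + 1)).toNat : ℤ) - 1 = ℓ by omega]
      ring

theorem cut_monotone (x : ℤ → A) : Monotone (cut σ x) :=
  monotone_int_of_le_succ fun ℓ => by rw [cut_succ]; omega

theorem cut_add (x : ℤ → A) (a b : ℤ) :
    cut σ x (a + b) = cut σ x a + cut σ (fun n => x (a + n)) b := by
  induction b using Int.induction_on with
  | zero => simp [cut_zero]
  | succ b ih => rw [← add_assoc, cut_succ, ih, cut_succ, add_assoc]
  | pred b ih =>
    have h := cut_succ σ x (a + (-b - 1))
    have h' := cut_succ σ (fun n => x (a + n)) (-b - 1)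
    rw [add_assoc, sub_add_cancel] at h
    rw [sub_add_cancel] at h'
    omega

theorem cut_shift_neg (x : ℤ → A) (a : ℤ) :
    cut σ (fun n => x (a + n)) (-a) = -cut σ x a := by
  have h := cut_add σ x a (-a)
  rw [add_neg_cancel, cut_zero] at h
  omega

variable {σ}

theorem IsSubstPt.shift {x : ℤ → A} {u : ℤ → B} (h : IsSubstPt σ x u) (a : ℤ) :
    IsSubstPt σ (fun n => x (a + n)) (fun n => u (n + cut σ x a)) := by
  intro ℓ j hj
  dsimp only
  rw [show cut σ (fun n => x (a + n)) ℓ + j + cut σ x a = cut σ x (a + ℓ) + j by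
    rw [cut_add]; ring]
  exact h (a + ℓ) j hj

theorem IsRep.isSubstPt_shift {y : ℤ → B} {k m ℓ : ℤ} {x : ℤ → A} (h : IsRep σ y k x)
    (hm : m = cut σ x ℓ - k) : IsSubstPt σ (fun n => x (ℓ + n)) (fun n => y (n + m)) := by
  convert h.shift ℓ using 2 with n
  congr 1
  omega

theorem IsCenteredRep.neg_mem_Ico {y : ℤ → B} {k m ℓ : ℤ} {x : ℤ → A}
    (h : IsCenteredRep σ y k x) (hm : m = cut σ x ℓ - k) :
    -m ∈ Set.Ico (cut σ (fun n => x (ℓ + n)) (-ℓ))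
      (cut σ (fun n => x (ℓ + n)) (Order.succ (-ℓ))) := by
  obtain ⟨-, hk0, hk⟩ := h
  rw [Order.succ_eq_add_one, cut_succ, cut_shift_neg, add_neg_cancel]
  constructor <;> omega

end Recog

open Recog in
theorem stmt17_general {A B : Type*}
    (σ : A → List B) (hinj : InjZ σ)
    (y : ℤ → B) (k k' : ℤ) (x x' : ℤ → A)
    (h1 : IsCenteredRep σ y k x) (h2 : IsCenteredRep σ y k' x')
    (hne : ¬(k = k' ∧ x = x')) :
    cutSet σ x k ∩ cutSet σ x' k' = ∅ := by
  refine Set.eq_empty_iff_forall_notMem.2 fun m ⟨⟨ℓ, hm⟩, ⟨ℓ', hm'⟩⟩ => hne ?_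
  have hz : (fun n => x (ℓ + n)) = fun n => x' (ℓ' + n) :=
    hinj _ _ _ (h1.1.isSubstPt_shift hm) (h2.1.isSubstPt_shift hm')
  obtain rfl : ℓ = ℓ' := by
    by_contra hℓ
    have hdisj := (cut_monotone σ fun n => x (ℓ + n)).pairwise_disjoint_on_Ico_succ
      (neg_injective.ne hℓ)
    exact Set.disjoint_left.1 hdisj (h1.neg_mem_Ico hm) (hz ▸ h2.neg_mem_Ico hm')
  obtain rfl : x = x' := funext fun n => by simpa using congrFun hz (n - ℓ)
  exact ⟨by omega, rfl⟩

open Recog in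
/-- For a morphism injective on `𝒜^ℤ`, distinct centered σ-representations of
the same point have no common σ-cut. -/
theorem stmt17 {A B : Type*} [Fintype A] [Fintype B]
    (σ : A → List B) (hσ : NonErasing σ) (hinj : InjZ σ)
    (y : ℤ → B) (k k' : ℤ) (x x' : ℤ → A)
    (h1 : IsCenteredRep σ y k x) (h2 : IsCenteredRep σ y k' x')
    (hne : ¬(k = k' ∧ x = x')) :
    cutSet σ x k ∩ cutSet σ x' k' = ∅ :=
  stmt17_general σ hinj y k k' x x' h1 h2 hne
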